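/- Suppose m = d, b and σ satisfy the Lipschitz assumption, and a = σσ' is uniformly elliptic. Let x* be a periodic solution of the DDE with orbit 𝐎 and let 𝐃 be a bounded domain in 𝐂 containing 𝐎. Then V̄ < ∞ and V̲ < ∞. -/

import Mathlib

open MeasureTheory Set Metric
open scoped ENNReal

noncomputable section

/-- `ℝ^d`. -/
abbrev Vec (d : ℕ) := EuclideanSpace ℝ (Fin d)

/-- The state space `𝐂 = C([-τ,0],ℝ^d)`. -/
abbrev Hist (τ : ℝ) (d : ℕ) := C(Icc (-τ) (0:ℝ), Vec d)

/-- The path space `C([-τ,T],ℝ^d)`. -/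
abbrev Traj (τ T : ℝ) (d : ℕ) := C(Icc (-τ) T, Vec d)

/-- Matrix acting on a vector. -/
def matVec {d m : ℕ} (M : Matrix (Fin d) (Fin m) ℝ) (v : Vec m) : Vec d :=
  WithLp.toLp 2 (fun i => ∑ j, M i j * v j)

/-- Squared Frobenius norm of a matrix. -/
def frobSq {d m : ℕ} (M : Matrix (Fin d) (Fin m) ℝ) : ℝ := ∑ i, ∑ j, (M i j) ^ 2

/-- Frobenius norm of a matrix. -/
def frobNorm {d m : ℕ} (M : Matrix (Fin d) (Fin m) ℝ) : ℝ := Real.sqrt (frobSq M)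

/-- Evaluation of a path at a time `t ∈ [-τ,T]` (clamped). -/
def ev {d : ℕ} {τ T : ℝ} (h : -τ ≤ T) (x : Traj τ T d) (t : ℝ) : Vec d :=
  x (projIcc (-τ) T h t)

/-- The history segment `x_t ∈ 𝐂` of a path `x ∈ C([-τ,T],ℝ^d)`, for `t ∈ [0,T]`. -/
def seg {d : ℕ} {τ T : ℝ} (h : -τ ≤ T) (x : Traj τ T d) (t : ℝ) : Hist τ d :=
  ⟨fun s => x (projIcc (-τ) T h (t + s.1)),
    x.continuous.comp <| continuous_projIcc.comp <| continuous_const.add continuous_subtype_val⟩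

/-- The uniform Lipschitz assumption on the coefficients:
`|b(φ)−b(ψ)|² + |σ(φ)−σ(ψ)|² ≤ κ₁ ‖φ−ψ‖²`. -/
def LipCoeff {d m : ℕ} {τ : ℝ} (b : Hist τ d → Vec d)
    (σ' : Hist τ d → Matrix (Fin d) (Fin m) ℝ) (κ₁ : ℝ) : Prop :=
  ∀ φ ψ : Hist τ d, ‖b φ - b ψ‖ ^ 2 + frobSq (σ' φ - σ' ψ) ≤ κ₁ * ‖φ - ψ‖ ^ 2

/-- The linear growth bound `|b(φ)|² + |σ(φ)|² ≤ κ₂ (1 + ‖φ‖²)`. -/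
def GrowthCoeff {d m : ℕ} {τ : ℝ} (b : Hist τ d → Vec d)
    (σ' : Hist τ d → Matrix (Fin d) (Fin m) ℝ) (κ₂ : ℝ) : Prop :=
  ∀ φ : Hist τ d, ‖b φ‖ ^ 2 + frobSq (σ' φ) ≤ κ₂ * (1 + ‖φ‖ ^ 2)

/-- The set `U_T(x)` of controls `u ∈ L²([0,T],ℝ^m)` satisfying
`x(t) = x(0) + ∫₀ᵗ b(x_s) ds + ∫₀ᵗ σ(x_s) u(s) ds` for `t ∈ [0,T]`. -/
def controls {d m : ℕ} {τ T : ℝ} (h : -τ ≤ T) (b : Hist τ d → Vec d)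
    (σ' : Hist τ d → Matrix (Fin d) (Fin m) ℝ) (x : Traj τ T d) : Set (ℝ → Vec m) :=
  {u | MemLp u 2 (volume.restrict (Icc 0 T)) ∧
    ∀ t ∈ Icc (0:ℝ) T,
      ev h x t = ev h x 0 + (∫ s in (0:ℝ)..t, b (seg h x s)) +
        ∫ s in (0:ℝ)..t, matVec (σ' (seg h x s)) (u s)}

/-- The rate function `I_T(x) = inf_{u ∈ U_T(x)} ½∫₀ᵀ |u(s)|² ds` (with value `∞` if
`U_T(x) = ∅`). -/
def rate {d m : ℕ} {τ T : ℝ} (h : -τ ≤ T) (b : Hist τ d → Vec d)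
    (σ' : Hist τ d → Matrix (Fin d) (Fin m) ℝ) (x : Traj τ T d) : ℝ≥0∞ :=
  ⨅ (u : ℝ → Vec m) (_ : u ∈ controls h b σ' x),
    ENNReal.ofReal ((1/2) * ∫ s in (0:ℝ)..T, ‖u s‖ ^ 2)

open Classical in
/-- The rate function `I_T^φ(x)`, which is `I_T(x)` if `x₀ = φ` and `∞` otherwise. -/
def rateAt {d m : ℕ} {τ T : ℝ} (h : -τ ≤ T) (b : Hist τ d → Vec d)
    (σ' : Hist τ d → Matrix (Fin d) (Fin m) ℝ) (φ : Hist τ d) (x : Traj τ T d) : ℝ≥0∞ :=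
  if seg h x 0 = φ then rate h b σ' x else ⊤

/-- The history segment `x_t ∈ 𝐂` of a function `x ∈ C(ℝ,ℝ^d)` (used for functions on
`[-τ,∞)`, extended continuously to `ℝ`). -/
def segF {d : ℕ} (τ : ℝ) (x : C(ℝ, Vec d)) (t : ℝ) : Hist τ d :=
  ⟨fun s => x (t + s.1), x.continuous.comp <| continuous_const.add continuous_subtype_val⟩

/-- `x` is a solution of the DDE `x(t) = x(0) + ∫₀ᵗ b(x_s) ds`, `t ≥ 0`. -/
def IsDDESol {d : ℕ} (τ : ℝ) (b : Hist τ d → Vec d) (x : C(ℝ, Vec d)) : Prop :=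
  ∀ t : ℝ, 0 ≤ t → x t = x 0 + ∫ s in (0:ℝ)..t, b (segF τ x s)

/-- `x` is a periodic solution of the DDE with period `p`. -/
def IsPeriodicSol {d : ℕ} (τ : ℝ) (b : Hist τ d → Vec d) (x : C(ℝ, Vec d)) (p : ℝ) : Prop :=
  IsDDESol τ b x ∧ 0 < p ∧ ∀ t : ℝ, -τ ≤ t → x (t + p) = x t

/-- The orbit `𝐎 = {x*_t : t ∈ [0,p)} ⊂ 𝐂` of a periodic solution. -/
def orbit {d : ℕ} (τ : ℝ) (x : C(ℝ, Vec d)) (p : ℝ) : Set (Hist τ d) :=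
  (segF τ x) '' Ico 0 p

/-- Uniform ellipticity of `a = σσ'`: `ν' a(φ) ν ≥ c |ν|²`. -/
def UnifElliptic {d : ℕ} {τ : ℝ} (σ' : Hist τ d → Matrix (Fin d) (Fin d) ℝ) (c : ℝ) : Prop :=
  ∀ (φ : Hist τ d) (ν : Fin d → ℝ),
    c * (∑ i, ν i ^ 2) ≤ dotProduct ν ((σ' φ * Matrix.transpose (σ' φ)).mulVec ν)

/-- The quasipotential `V(ψ) = inf { I_T(x) : T > 0, x₀ ∈ 𝐎, x_T = ψ }`. -/
def quasipot {d m : ℕ} {τ : ℝ} (hτ : 0 < τ) (b : Hist τ d → Vec d)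
    (σ' : Hist τ d → Matrix (Fin d) (Fin m) ℝ) (O : Set (Hist τ d)) (ψ : Hist τ d) : ℝ≥0∞ :=
  ⨅ (T : ℝ) (hT : 0 < T) (x : Traj τ T d)
    (_ : seg (show -τ ≤ T by linarith) x 0 ∈ O ∧ seg (show -τ ≤ T by linarith) x T = ψ),
    rate (show -τ ≤ T by linarith) b σ' x

/-- `V̄ = inf { V(ψ) : ψ ∉ cl(𝐃) }`. -/
def Vbar {d m : ℕ} {τ : ℝ} (hτ : 0 < τ) (b : Hist τ d → Vec d)
    (σ' : Hist τ d → Matrix (Fin d) (Fin m) ℝ) (O D : Set (Hist τ d)) : ℝ≥0∞ :=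
  ⨅ (ψ : Hist τ d) (_ : ψ ∉ closure D), quasipot hτ b σ' O ψ

/-- `V_η = inf { V(ψ) : ψ ∈ 𝐁(𝐃ᶜ,η) }`. -/
def Veta {d m : ℕ} {τ : ℝ} (hτ : 0 < τ) (b : Hist τ d → Vec d)
    (σ' : Hist τ d → Matrix (Fin d) (Fin m) ℝ) (O D : Set (Hist τ d)) (η : ℝ) : ℝ≥0∞ :=
  ⨅ (ψ : Hist τ d) (_ : infDist ψ Dᶜ < η), quasipot hτ b σ' O ψ

/-- `V̲ = lim_{η→0} V_η`; since `η ↦ V_η` is nondecreasing as `η → 0`, the limit equals the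
supremum over `η > 0`. -/
def Vlower {d m : ℕ} {τ : ℝ} (hτ : 0 < τ) (b : Hist τ d → Vec d)
    (σ' : Hist τ d → Matrix (Fin d) (Fin m) ℝ) (O D : Set (Hist τ d)) : ℝ≥0∞ :=
  ⨆ (η : ℝ) (_ : 0 < η), Veta hτ b σ' O D η


/-!
Starting from the orbit point `x*_0`, steer the system along the straight line
`x(t) = x*(0) + t w`. Uniform ellipticity makes `σ` invertible and the Lipschitz condition makes
`b` and `σ` continuous, so `u(t) = σ(x_t)⁻¹ (w - b(x_t))` is a continuous control realising this
path, of finite energy. For `|w|` large the final segment `ψ` lies outside the bounded set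
`cl 𝐃`; then `ψ ∈ 𝐃ᶜ` gives `d₀(ψ, 𝐃ᶜ) = 0 < η`, so `V̄` and every `V_η` are at most `V(ψ) < ∞`.
-/

section Coefficients

variable {d m : ℕ} {τ κ₁ c : ℝ} {b : Hist τ d → Vec d}

lemma sq_le_frobSq (M : Matrix (Fin d) (Fin m) ℝ) (i : Fin d) (j : Fin m) :
    M i j ^ 2 ≤ frobSq M :=
  calc M i j ^ 2 ≤ ∑ k, M i k ^ 2 :=
        Finset.single_le_sum (f := fun k => M i k ^ 2) (fun _ _ => sq_nonneg _)
          (Finset.mem_univ j)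
    _ ≤ frobSq M :=
        Finset.single_le_sum (f := fun l => ∑ k, M l k ^ 2)
          (fun _ _ => Finset.sum_nonneg fun _ _ => sq_nonneg _) (Finset.mem_univ i)

lemma abs_le_sqrt_toNNReal_mul_of_sq_le {a r κ : ℝ} (hr : 0 ≤ r) (h : a ^ 2 ≤ κ * r ^ 2) :
    |a| ≤ NNReal.sqrt κ.toNNReal * r := by
  have hκ : κ * r ^ 2 ≤ κ.toNNReal * r ^ 2 :=
    mul_le_mul_of_nonneg_right (Real.le_coe_toNNReal κ) (sq_nonneg r)
  calc |a| ≤ √(κ.toNNReal * r ^ 2) := Real.abs_le_sqrt (h.trans hκ)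
    _ = NNReal.sqrt κ.toNNReal * r := by
      rw [Real.sqrt_mul NNReal.zero_le_coe, Real.sqrt_sq hr, Real.coe_sqrt]

variable {σ' : Hist τ d → Matrix (Fin d) (Fin m) ℝ}

lemma LipCoeff.lipschitzWith_drift (hlip : LipCoeff b σ' κ₁) :
    LipschitzWith (NNReal.sqrt κ₁.toNNReal) b := by
  refine LipschitzWith.of_dist_le_mul fun φ ψ => ?_
  rw [dist_eq_norm, dist_eq_norm, ← abs_norm]
  exact abs_le_sqrt_toNNReal_mul_of_sq_le (norm_nonneg _)
    ((le_add_of_nonneg_right (Finset.sum_nonneg fun _ _ =>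
      Finset.sum_nonneg fun _ _ => sq_nonneg _)).trans (hlip φ ψ))

lemma LipCoeff.continuous_dispersion (hlip : LipCoeff b σ' κ₁) : Continuous σ' := by
  refine continuous_pi fun i => continuous_pi fun j =>
    (LipschitzWith.of_dist_le_mul (K := NNReal.sqrt κ₁.toNNReal) fun φ ψ => ?_).continuous
  rw [Real.dist_eq, dist_eq_norm]
  refine abs_le_sqrt_toNNReal_mul_of_sq_le (norm_nonneg _) ?_
  calc (σ' φ i j - σ' ψ i j) ^ 2 ≤ frobSq (σ' φ - σ' ψ) := sq_le_frobSq (σ' φ - σ' ψ) i j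
    _ ≤ κ₁ * ‖φ - ψ‖ ^ 2 := (le_add_of_nonneg_left (sq_nonneg _)).trans (hlip φ ψ)

lemma UnifElliptic.det_ne_zero {σ' : Hist τ d → Matrix (Fin d) (Fin d) ℝ} (hc : 0 < c)
    (hell : UnifElliptic σ' c) (φ : Hist τ d) : (σ' φ).det ≠ 0 := by
  rw [← Matrix.det_transpose]
  rintro hdet
  obtain ⟨ν, hν, hker⟩ := Matrix.exists_mulVec_eq_zero_iff.mpr hdet
  have hell_ν := hell φ ν
  rw [← Matrix.mulVec_mulVec, hker, Matrix.mulVec_zero, dotProduct_zero] at hell_ν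
  have hsq : ∑ i, ν i ^ 2 = ν ⬝ᵥ ν := by simp only [dotProduct, sq]
  exact hν (dotProduct_self_eq_zero.mp (le_antisymm
    (hsq ▸ nonpos_of_mul_nonpos_right hell_ν hc)
    (hsq ▸ Finset.sum_nonneg fun _ _ => sq_nonneg _)))

end Coefficients

section Controls

variable {d : ℕ}

lemma matVec_eq_toLp_mulVec {m : ℕ} (M : Matrix (Fin d) (Fin m) ℝ) (v : Vec m) :
    matVec M v = WithLp.toLp 2 (M.mulVec (WithLp.ofLp v)) :=
  rfl

lemma exists_continuous_matVec_eq {X : Type*} [TopologicalSpace X]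
    {A : X → Matrix (Fin d) (Fin d) ℝ} (hA : Continuous A) (hdet : ∀ x, (A x).det ≠ 0)
    {v : X → Vec d} (hv : Continuous v) :
    ∃ u : X → Vec d, Continuous u ∧ ∀ x, matVec (A x) (u x) = v x := by
  have hinv : Continuous fun x => (A x)⁻¹ := by
    simp only [Matrix.inv_def, Ring.inverse_eq_inv']
    exact (hA.matrix_det.inv₀ hdet).smul hA.matrix_adjugate
  refine ⟨fun x => WithLp.toLp 2 ((A x)⁻¹.mulVec (WithLp.ofLp (v x))), ?_, fun x => ?_⟩
  · exact (PiLp.continuous_toLp 2 _).comp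
      ((hinv.matrix_mulVec ((PiLp.continuous_ofLp 2 _).comp hv)))
  · rw [matVec_eq_toLp_mulVec, WithLp.ofLp_toLp, Matrix.mulVec_mulVec,
      Matrix.mul_nonsing_inv _ (isUnit_iff_ne_zero.mpr (hdet x)), Matrix.one_mulVec,
      WithLp.toLp_ofLp]

variable {τ T : ℝ}

lemma continuous_seg (h : -τ ≤ T) (x : Traj τ T d) : Continuous (seg h x) :=
  let G : C(ℝ × Icc (-τ) (0:ℝ), Vec d) :=
    ⟨fun q => x (projIcc (-τ) T h (q.1 + q.2.1)),
      x.continuous.comp <| continuous_projIcc.comp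
        (continuous_fst.add (continuous_subtype_val.comp continuous_snd))⟩
  G.curry.continuous

lemma rate_lt_top_of_eq_integral (h : -τ ≤ T) {b : Hist τ d → Vec d}
    {σ' : Hist τ d → Matrix (Fin d) (Fin d) ℝ} (hb : Continuous b) (hσ : Continuous σ')
    (hdet : ∀ φ, (σ' φ).det ≠ 0) {x : Traj τ T d} {g : ℝ → Vec d} (hg : Continuous g)
    (hx : ∀ t ∈ Icc (0:ℝ) T, ev h x t = ev h x 0 + ∫ s in (0:ℝ)..t, g s) :
    rate h b σ' x < ⊤ := by
  have hbx : Continuous fun s => b (seg h x s) := hb.comp (continuous_seg h x)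
  obtain ⟨u, hu, hσu⟩ := exists_continuous_matVec_eq (hσ.comp (continuous_seg h x))
    (fun s => hdet _) (hg.sub hbx)
  obtain ⟨C, hC⟩ := (isCompact_Icc (a := (0:ℝ)) (b := T)).exists_bound_of_continuousOn
    hu.continuousOn
  have : IsFiniteMeasure (volume.restrict (Icc (0:ℝ) T)) := ⟨by simp⟩
  have hL2 : MemLp u 2 (volume.restrict (Icc 0 T)) :=
    MemLp.of_bound hu.aestronglyMeasurable C
      ((ae_restrict_iff' measurableSet_Icc).mpr (Filter.Eventually.of_forall hC))
  have hctrl : u ∈ controls h b σ' x := by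
    refine ⟨hL2, fun t ht => ?_⟩
    have hσu' : (∫ s in (0:ℝ)..t, matVec (σ' (seg h x s)) (u s)) =
        ∫ s in (0:ℝ)..t, (g s - b (seg h x s)) :=
      intervalIntegral.integral_congr fun s _ => hσu s
    rw [hσu', intervalIntegral.integral_sub (hg.intervalIntegrable 0 t)
      (hbx.intervalIntegrable 0 t), hx t ht]
    abel
  exact (iInf₂_le u hctrl).trans_lt ENNReal.ofReal_lt_top

lemma norm_ev_le_norm_seg (hτ : 0 ≤ τ) (h : -τ ≤ T) (x : Traj τ T d) (t : ℝ) :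
    ‖ev h x t‖ ≤ ‖seg h x t‖ := by
  have hev : ev h x t = seg h x t ⟨0, neg_nonpos.mpr hτ, le_rfl⟩ := by
    simp [ev, seg]
  exact hev ▸ ContinuousMap.norm_coe_le_norm _ _

end Controls

section LinearContinuation

variable {d : ℕ} {τ T : ℝ}

def linearContinuation (τ T : ℝ) (y : C(ℝ, Vec d)) (w : Vec d) : Traj τ T d :=
  ⟨fun t => y (min t.1 0) + max t.1 0 • w, by fun_prop⟩

lemma seg_linearContinuation_zero (h : -τ ≤ T) (hT : 0 ≤ T) (y : C(ℝ, Vec d)) (w : Vec d) :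
    seg h (linearContinuation τ T y w) 0 = segF τ y 0 := by
  ext1 s
  have hs : s.1 ∈ Icc (-τ) T := ⟨s.2.1, by linarith [s.2.2]⟩
  have hs0 : s.1 ≤ 0 := s.2.2
  simp [seg, segF, linearContinuation, projIcc_of_mem h hs, min_eq_left hs0, max_eq_right hs0]

lemma ev_linearContinuation (hτ : 0 ≤ τ) (h : -τ ≤ T) (y : C(ℝ, Vec d)) (w : Vec d) {t : ℝ}
    (ht : t ∈ Icc 0 T) : ev h (linearContinuation τ T y w) t = y 0 + t • w := by
  have htI : t ∈ Icc (-τ) T := ⟨by linarith [ht.1], ht.2⟩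
  simp [ev, linearContinuation, projIcc_of_mem h htI, min_eq_right ht.1, max_eq_left ht.1]

lemma ev_linearContinuation_eq_integral (hτ : 0 ≤ τ) (h : -τ ≤ T) (hT : 0 ≤ T)
    (y : C(ℝ, Vec d)) (w : Vec d) :
    ∀ t ∈ Icc (0:ℝ) T, ev h (linearContinuation τ T y w) t =
      ev h (linearContinuation τ T y w) 0 + ∫ _ in (0:ℝ)..t, w := by
  intro t ht
  rw [ev_linearContinuation hτ h y w ht, ev_linearContinuation hτ h y w ⟨le_rfl, hT⟩,
    intervalIntegral.integral_const, sub_zero, zero_smul, add_zero]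

end LinearContinuation

section Quasipotential

variable {d m : ℕ} {τ T : ℝ} (hτ : 0 < τ) {b : Hist τ d → Vec d}
  {σ' : Hist τ d → Matrix (Fin d) (Fin m) ℝ} {O D : Set (Hist τ d)} {ψ : Hist τ d}

lemma quasipot_seg_le_rate (hT : 0 < T) (h : -τ ≤ T) {x : Traj τ T d} (hx : seg h x 0 ∈ O) :
    quasipot hτ b σ' O (seg h x T) ≤ rate h b σ' x :=
  iInf_le_of_le T <| iInf_le_of_le hT <| iInf_le_of_le x <| iInf_le_of_le ⟨hx, rfl⟩ le_rfl

lemma Vbar_le_quasipot (hψ : ψ ∉ closure D) : Vbar hτ b σ' O D ≤ quasipot hτ b σ' O ψ :=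
  iInf₂_le ψ hψ

lemma Vlower_le_quasipot (hψ : ψ ∉ D) : Vlower hτ b σ' O D ≤ quasipot hτ b σ' O ψ :=
  iSup₂_le fun _ hη => iInf₂_le ψ (by rwa [infDist_zero_of_mem (mem_compl hψ)])

end Quasipotential

theorem stmt_13_general {d : ℕ} (hd : 0 < d) {τ : ℝ} (hτ : 0 < τ)
    (b : Hist τ d → Vec d) (σ' : Hist τ d → Matrix (Fin d) (Fin d) ℝ)
    {κ₁ : ℝ} (hlip : LipCoeff b σ' κ₁)
    {c : ℝ} (hc : 0 < c) (hell : UnifElliptic σ' c)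
    (xs : C(ℝ, Vec d)) (p : ℝ) (hxs : IsPeriodicSol τ b xs p)
    (D : Set (Hist τ d))
    (hDbdd : Bornology.IsBounded D) :
    Vbar hτ b σ' (orbit τ xs p) D < ⊤ ∧ Vlower hτ b σ' (orbit τ xs p) D < ⊤ := by
  obtain ⟨R, hR, hRD⟩ := hDbdd.closure.exists_pos_norm_le
  have : Nonempty (Fin d) := ⟨⟨0, hd⟩⟩
  obtain ⟨w, hw⟩ := exists_norm_eq (Vec d) (c := R + ‖xs 0‖ + 1) (by positivity)
  have h : -τ ≤ 1 := by linarith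
  set x := linearContinuation τ 1 xs w
  have hx0 : seg h x 0 ∈ orbit τ xs p :=
    ⟨0, ⟨le_rfl, hxs.2.1⟩, (seg_linearContinuation_zero h zero_le_one xs w).symm⟩
  have hrate : rate h b σ' x < ⊤ :=
    rate_lt_top_of_eq_integral h hlip.lipschitzWith_drift.continuous hlip.continuous_dispersion
      (hell.det_ne_zero hc) continuous_const
      (ev_linearContinuation_eq_integral hτ.le h zero_le_one xs w)
  have hψ : seg h x 1 ∉ closure D := fun hmem => by
    have hfar := norm_ev_le_norm_seg hτ.le h x 1
    rw [ev_linearContinuation hτ.le h xs w ⟨zero_le_one, le_rfl⟩, one_smul] at hfar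
    have hw_le := norm_sub_le (xs 0 + w) (xs 0)
    rw [add_sub_cancel_left] at hw_le
    linarith [hRD _ hmem]
  have hV := (quasipot_seg_le_rate hτ one_pos h hx0).trans_lt hrate
  exact ⟨(Vbar_le_quasipot hτ hψ).trans_lt hV,
    (Vlower_le_quasipot hτ fun hD => hψ (subset_closure hD)).trans_lt hV⟩

/-- Remark 3.5: `V̄` and `V̲` are finite. -/
theorem stmt_13 {d : ℕ} (hd : 0 < d) {τ : ℝ} (hτ : 0 < τ)
    (b : Hist τ d → Vec d) (σ' : Hist τ d → Matrix (Fin d) (Fin d) ℝ)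
    {κ₁ : ℝ} (hκ₁ : 0 < κ₁) (hlip : LipCoeff b σ' κ₁)
    {c : ℝ} (hc : 0 < c) (hell : UnifElliptic σ' c)
    (xs : C(ℝ, Vec d)) (p : ℝ) (hxs : IsPeriodicSol τ b xs p)
    (D : Set (Hist τ d)) (hDopen : IsOpen D) (hDconn : IsConnected D)
    (hDbdd : Bornology.IsBounded D) (hOD : orbit τ xs p ⊆ D) :
    Vbar hτ b σ' (orbit τ xs p) D < ⊤ ∧ Vlower hτ b σ' (orbit τ xs p) D < ⊤ :=
  stmt_13_general hd hτ b σ' hlip hc hell xs p hxs D hDbdd
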